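/- For each N ≥ 2 and z ∈ (0,1), the quantity N(N-1)z²(1-z)^{N-2}·₃F₂([1,1,2-N],[2,2]; -z/(1-z)) equals 1 + 1/(Nz) + o(1/N) as N → ∞ (with z fixed). -/

import Mathlib

open Finset Filter

/-!
Let `b_j = C(N,j) zʲ (1-z)^(N-j)` be the binomial weights. Since `(-N+2)ₖ = (-1)ᵏ k! C(N-2,k)`,
the `k`-th term of `N(N-1)z²(1-z)^(N-2) ₃F₂(…)` is `(1 + 1/(k+1)) b_{k+2}`, so the left side is
`∑_{j ≥ 2} (1 + 1/(j-1)) b_j`. Split `1/(j-1) = 1/(j+1) + 2/((j-1)(j+1))`: the weights sum to `1`,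
`∑ b_j/(j+1) = (1 - (1-z)^(N+1))/((N+1)z)` exactly, and the last sum is `O(1/N²)` because
`b_j/((j+1)(j+2))` is, up to the factor `1/((N+1)(N+2)z²)`, a weight of `Bin(N+2, z)`.
What is left over are the weights `b_0`, `b_1` and `(1-z)^(N+1)`, which decay geometrically.
-/

/-- Pochhammer symbol `(a)ₖ = a(a+1)⋯(a+k-1)`. -/
def poch (a : ℝ) (k : ℕ) : ℝ := ∏ j ∈ Finset.range k, (a + j)

/-- Terminating generalized hypergeometric series
`₃F₂([1,1,a₃],[2,2]; x) = ∑_{k<terms} (1)ₖ(1)ₖ(a₃)ₖ/((2)ₖ(2)ₖ k!) xᵏ`. -/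
noncomputable def F32 (a3 : ℝ) (terms : ℕ) (x : ℝ) : ℝ :=
  ∑ k ∈ Finset.range terms,
    (poch 1 k * poch 1 k * poch a3 k) / (poch 2 k * poch 2 k * (k.factorial : ℝ)) * x ^ k

lemma poch_one (k : ℕ) : poch 1 k = k.factorial := by
  rw [poch, ← prod_range_add_one_eq_factorial]
  push_cast
  exact prod_congr rfl fun j _ => add_comm _ _

lemma poch_two (k : ℕ) : poch 2 k = (k + 1).factorial := by
  induction k with
  | zero => simp [poch]
  | succ k ih =>
    rw [poch, prod_range_succ, ← poch, ih, Nat.factorial_succ (k + 1)]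
    push_cast
    ring

lemma poch_neg_natCast (m k : ℕ) : poch (-m) k = (-1) ^ k * k.factorial * m.choose k := by
  rcases le_or_gt k m with hk | hk
  · rw [mul_assoc, ← Nat.cast_mul, ← Nat.descFactorial_eq_factorial_mul_choose, poch,
      Nat.descFactorial_eq_prod_range, Nat.cast_prod, pow_eq_prod_const, ← prod_mul_distrib]
    refine prod_congr rfl fun j hj => ?_
    rw [Nat.cast_sub (by simp at hj; omega)]
    ring
  · rw [Nat.choose_eq_zero_of_lt hk, Nat.cast_zero, mul_zero]
    exact prod_eq_zero (mem_range.2 hk) (neg_add_cancel _)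

lemma F32_neg_natCast (m : ℕ) (x : ℝ) :
    F32 (-m) (m + 1) x = ∑ k ∈ range (m + 1), m.choose k / ((k : ℝ) + 1) ^ 2 * (-x) ^ k := by
  refine sum_congr rfl fun k _ => ?_
  rw [poch_one, poch_two, poch_neg_natCast, Nat.factorial_succ, neg_pow]
  have : (k.factorial : ℝ) ≠ 0 := by positivity
  push_cast
  field_simp
  ring

noncomputable def binomialWeight (n : ℕ) (z : ℝ) (j : ℕ) : ℝ :=
  n.choose j * z ^ j * (1 - z) ^ (n - j)

lemma sum_binomialWeight (n : ℕ) (z : ℝ) : ∑ j ∈ range (n + 1), binomialWeight n z j = 1 := by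
  have h := (add_pow z (1 - z) n).symm
  rw [add_sub_cancel, one_pow] at h
  rw [← h]
  exact sum_congr rfl fun j _ => by rw [binomialWeight]; ring

lemma binomialWeight_nonneg {z : ℝ} (hz0 : 0 ≤ z) (hz1 : z ≤ 1) (n j : ℕ) :
    0 ≤ binomialWeight n z j := by
  have : 0 ≤ 1 - z := by linarith
  unfold binomialWeight
  positivity

lemma binomialWeight_zero_right (n : ℕ) (z : ℝ) : binomialWeight n z 0 = (1 - z) ^ n := by
  simp [binomialWeight]

lemma binomialWeight_mul (n j : ℕ) (z : ℝ) :
    binomialWeight n z j * ((n + 1) * z) = binomialWeight (n + 1) z (j + 1) * (j + 1) := by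
  have h : ((n + 1 : ℕ) : ℝ) * n.choose j = (n + 1).choose (j + 1) * (j + 1 : ℕ) := by
    exact_mod_cast Nat.add_one_mul_choose_eq n j
  push_cast at h
  simp only [binomialWeight, Nat.add_sub_add_right, pow_succ]
  linear_combination z ^ j * (1 - z) ^ (n - j) * z * h

lemma sum_range_add_two (f : ℕ → ℝ) (m : ℕ) :
    ∑ j ∈ range (m + 3), f j = f 0 + f 1 + ∑ k ∈ range (m + 1), f (k + 2) := by
  rw [show m + 3 = 2 + (m + 1) by ring, sum_range_add]
  simp [sum_range_succ, add_comm]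

lemma sum_binomialWeight_div_succ {z : ℝ} (hz : z ≠ 0) (n : ℕ) :
    ∑ j ∈ range (n + 1), binomialWeight n z j / (j + 1)
      = (1 - (1 - z) ^ (n + 1)) / ((n + 1) * z) := by
  have hnz : ((n : ℝ) + 1) * z ≠ 0 := by positivity
  have hsum := sum_binomialWeight (n + 1) z
  rw [sum_range_succ', binomialWeight_zero_right] at hsum
  rw [eq_div_iff hnz, sum_mul, ← eq_sub_of_add_eq hsum]
  refine sum_congr rfl fun j _ => ?_
  rw [div_mul_eq_mul_div, binomialWeight_mul, mul_div_assoc, div_self (by positivity), mul_one]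

lemma sum_binomialWeight_div_le {z : ℝ} (hz0 : 0 < z) (hz1 : z ≤ 1) (n : ℕ) :
    ∑ j ∈ range (n + 1), binomialWeight n z j / ((j + 1) * (j + 2))
      ≤ 1 / ((n + 1) * (n + 2) * z ^ 2) := by
  have hterm : ∀ j : ℕ, binomialWeight n z j / ((j + 1) * (j + 2))
      = binomialWeight (n + 2) z (j + 2) / ((n + 1) * (n + 2) * z ^ 2) := by
    intro j
    have h1 := binomialWeight_mul n j z
    have h2 := binomialWeight_mul (n + 1) (j + 1) z
    push_cast at h2
    rw [div_eq_div_iff (by positivity) (by positivity)]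
    linear_combination ((n : ℝ) + 2) * z * h1 + ((j : ℝ) + 1) * h2
  calc ∑ j ∈ range (n + 1), binomialWeight n z j / ((j + 1) * (j + 2))
      = (∑ k ∈ range (n + 1), binomialWeight (n + 2) z (k + 2)) / ((n + 1) * (n + 2) * z ^ 2) := by
        simp_rw [hterm, sum_div]
    _ ≤ 1 / ((n + 1) * (n + 2) * z ^ 2) := by
        gcongr
        have hsum := sum_range_add_two (binomialWeight (n + 2) z) n
        rw [sum_binomialWeight] at hsum
        linarith [binomialWeight_nonneg hz0.le hz1 (n + 2) 0,
          binomialWeight_nonneg hz0.le hz1 (n + 2) 1]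

lemma one_sub_pow_mul_F32_neg_natCast {z : ℝ} (hz : z ≠ 1) (m : ℕ) :
    (1 - z) ^ m * F32 (-m) (m + 1) (-z / (1 - z))
      = ∑ k ∈ range (m + 1), binomialWeight m z k / ((k : ℝ) + 1) ^ 2 := by
  have hz' : 1 - z ≠ 0 := sub_ne_zero.2 hz.symm
  rw [F32_neg_natCast, mul_sum]
  refine sum_congr rfl fun k hk => ?_
  rw [neg_div, neg_neg, div_pow, binomialWeight,
    ← Nat.sub_add_cancel (Nat.lt_succ_iff.1 (mem_range.1 hk)), pow_add, Nat.add_sub_cancel]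
  field_simp

lemma binomialWeight_div_sq_mul (m k : ℕ) (z : ℝ) :
    ((m : ℝ) + 2) * (m + 1) * z ^ 2 * (binomialWeight m z k / ((k : ℝ) + 1) ^ 2)
      = (1 + 1 / ((k : ℝ) + 1)) * binomialWeight (m + 2) z (k + 2) := by
  have h1 := binomialWeight_mul m k z
  have h2 := binomialWeight_mul (m + 1) (k + 1) z
  push_cast at h2
  field_simp
  linear_combination ((m : ℝ) + 2) * z * h1 + ((k : ℝ) + 1) * h2

lemma scaled_F32_neg_natCast {z : ℝ} (hz : z ≠ 1) (m : ℕ) :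
    ((m : ℝ) + 2) * (m + 1) * z ^ 2 * (1 - z) ^ m * F32 (-m) (m + 1) (-z / (1 - z))
      = ∑ k ∈ range (m + 1), (1 + 1 / ((k : ℝ) + 1)) * binomialWeight (m + 2) z (k + 2) := by
  rw [mul_assoc, one_sub_pow_mul_F32_neg_natCast hz, mul_sum]
  exact sum_congr rfl fun k _ => binomialWeight_div_sq_mul m k z

/-- `∑_{j ≥ 2} b_j · 2/((j-1)(j+1))` for `N = m + 2`, indexed by `k = j - 2`. -/
noncomputable def binomialRemainder (m : ℕ) (z : ℝ) : ℝ :=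
  ∑ k ∈ range (m + 1), binomialWeight (m + 2) z (k + 2) * (2 / ((k + 1) * (k + 3)))

lemma binomialRemainder_nonneg {z : ℝ} (hz0 : 0 ≤ z) (hz1 : z ≤ 1) (m : ℕ) :
    0 ≤ binomialRemainder m z :=
  sum_nonneg fun _ _ => mul_nonneg (binomialWeight_nonneg hz0 hz1 _ _) (by positivity)

lemma binomialRemainder_le {z : ℝ} (hz0 : 0 < z) (hz1 : z ≤ 1) (m : ℕ) :
    binomialRemainder m z ≤ 8 / ((m + 3) * (m + 4) * z ^ 2) := by
  set f : ℕ → ℝ := fun j => binomialWeight (m + 2) z j / ((j + 1) * (j + 2))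
  have hf : ∀ j, 0 ≤ f j := fun j =>
    div_nonneg (binomialWeight_nonneg hz0.le hz1 _ _) (by positivity)
  have hterm : ∀ k : ℕ,
      binomialWeight (m + 2) z (k + 2) * (2 / ((k + 1) * (k + 3))) ≤ 8 * f (k + 2) := by
    intro k
    have hfrac : (2 : ℝ) / ((k + 1) * (k + 3)) ≤ 8 / ((k + 3) * (k + 4)) := by
      rw [div_le_div_iff₀ (by positivity) (by positivity)]
      nlinarith
    calc _ ≤ binomialWeight (m + 2) z (k + 2) * (8 / ((k + 3) * (k + 4))) :=
          mul_le_mul_of_nonneg_left hfrac (binomialWeight_nonneg hz0.le hz1 _ _)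
      _ = 8 * f (k + 2) := by simp only [f]; push_cast; ring
  calc binomialRemainder m z ≤ ∑ k ∈ range (m + 1), 8 * f (k + 2) :=
        sum_le_sum fun k _ => hterm k
    _ ≤ 8 * ∑ j ∈ range (m + 3), f j := by
        rw [← mul_sum, sum_range_add_two f m]
        linarith [hf 0, hf 1]
    _ ≤ 8 * (1 / ((m + 2 + 1) * (m + 2 + 2) * z ^ 2)) := by
        gcongr
        have h := sum_binomialWeight_div_le hz0 hz1 (m + 2)
        push_cast at h
        exact h
    _ = 8 / ((m + 3) * (m + 4) * z ^ 2) := by ring_nf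

lemma sum_one_add_inv_mul_binomialWeight_sub {z : ℝ} (hz : z ≠ 0) (m : ℕ) :
    ∑ k ∈ range (m + 1), (1 + 1 / ((k : ℝ) + 1)) * binomialWeight (m + 2) z (k + 2)
        - (1 + 1 / ((m + 2) * z))
      = binomialRemainder m z - 2 * binomialWeight (m + 2) z 0
        - 3 / 2 * binomialWeight (m + 2) z 1
        - (1 - z) ^ (m + 3) / ((m + 3) * z) - 1 / ((m + 2) * (m + 3) * z) := by
  have hmass := sum_range_add_two (binomialWeight (m + 2) z) m
  have hmean := sum_range_add_two (fun j => binomialWeight (m + 2) z j / (j + 1)) m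
  rw [sum_binomialWeight] at hmass
  rw [sum_binomialWeight_div_succ hz] at hmean
  have hsplit : ∀ k : ℕ, (1 + 1 / ((k : ℝ) + 1)) * binomialWeight (m + 2) z (k + 2)
      = binomialWeight (m + 2) z (k + 2) + binomialWeight (m + 2) z (k + 2) / ((k + 2 : ℕ) + 1)
        + binomialWeight (m + 2) z (k + 2) * (2 / ((k + 1) * (k + 3))) := by
    intro k
    push_cast
    field_simp
    ring
  have hrat : 1 / ((m + 3) * z) - 1 / ((m + 2) * z) + 1 / ((m + 2) * (m + 3) * z) = (0 : ℝ) := by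
    field_simp
    ring
  simp only [hsplit, sum_add_distrib, binomialRemainder]
  push_cast at hmass hmean ⊢
  linear_combination -hmass - hmean + hrat

lemma tendsto_natCast_mul_binomialWeight {z : ℝ} (hz0 : 0 < z) (hz1 : z < 1) (j : ℕ) :
    Tendsto (fun n : ℕ => n * binomialWeight n z j) atTop (nhds 0) := by
  have hr : |1 - z| < 1 := by rw [abs_lt]; constructor <;> linarith
  have hlim := (tendsto_pow_const_mul_const_pow_of_abs_lt_one (j + 1) hr).const_mul
    (z ^ j / (1 - z) ^ j)
  rw [mul_zero] at hlim
  refine squeeze_zero' (Eventually.of_forall fun n =>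
    mul_nonneg n.cast_nonneg (binomialWeight_nonneg hz0.le hz1.le n j)) ?_ hlim
  filter_upwards [eventually_ge_atTop j] with n hn
  have hsplit : (1 - z) ^ n = (1 - z) ^ (n - j) * (1 - z) ^ j := by
    rw [← pow_add, Nat.sub_add_cancel hn]
  have hchoose : (n.choose j : ℝ) ≤ n ^ j := by exact_mod_cast Nat.choose_le_pow n j
  have : (0 : ℝ) < 1 - z := by linarith
  rw [hsplit, binomialWeight]
  field_simp
  rw [pow_succ']
  exact mul_le_mul_of_nonneg_left hchoose n.cast_nonneg

lemma tendsto_const_div_natCast_add (C : ℝ) (a : ℕ) :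
    Tendsto (fun m : ℕ => C / ((m : ℝ) + a)) atTop (nhds 0) := by
  have h := (tendsto_add_atTop_iff_nat a).2 (tendsto_const_div_atTop_nhds_zero_nat C)
  simpa using h

lemma tendsto_mul_binomialRemainder {z : ℝ} (hz0 : 0 < z) (hz1 : z ≤ 1) :
    Tendsto (fun m : ℕ => ((m : ℝ) + 2) * binomialRemainder m z) atTop (nhds 0) := by
  refine squeeze_zero
    (fun m => mul_nonneg (by positivity) (binomialRemainder_nonneg hz0.le hz1 m))
    (fun m => ?_) (tendsto_const_div_natCast_add (8 / z ^ 2) 4)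
  calc ((m : ℝ) + 2) * binomialRemainder m z
      ≤ (m + 2) * (8 / ((m + 3) * (m + 4) * z ^ 2)) := by
        gcongr
        exact binomialRemainder_le hz0 hz1 m
    _ ≤ 8 / z ^ 2 / ((m : ℝ) + (4 : ℕ)) := by
        push_cast
        rw [div_div, mul_div_assoc', div_le_div_iff₀ (by positivity) (by positivity)]
        nlinarith [pow_pos hz0 2]

lemma tendsto_mul_one_sub_pow_div {z : ℝ} (hz0 : 0 < z) (hz1 : z < 1) :
    Tendsto (fun m : ℕ => ((m : ℝ) + 2) * ((1 - z) ^ (m + 3) / ((m + 3) * z))) atTop (nhds 0) := by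
  have hpow := ((tendsto_add_atTop_iff_nat 3).2 (tendsto_pow_atTop_nhds_zero_of_lt_one
    (sub_nonneg.2 hz1.le) (sub_lt_self 1 hz0))).div_const z
  rw [zero_div] at hpow
  have hr : 0 ≤ 1 - z := by linarith
  refine squeeze_zero (fun m => by positivity) (fun m => ?_) hpow
  rw [mul_div_assoc', div_le_div_iff₀ (by positivity) hz0]
  have : 0 ≤ (1 - z) ^ (m + 3) := pow_nonneg hr _
  nlinarith

lemma isLittleO_one_div_of_tendsto_mul {f : ℕ → ℝ}
    (h : Tendsto (fun n : ℕ => n * f n) atTop (nhds 0)) :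
    f =o[atTop] fun n : ℕ => 1 / (n : ℝ) := by
  rw [Asymptotics.isLittleO_iff_tendsto']
  · refine h.congr' ?_
    filter_upwards [eventually_ne_atTop 0] with n hn
    field_simp
  · filter_upwards [eventually_ne_atTop 0] with n hn h0
    simp [hn] at h0

/-- For fixed `z ∈ (0,1)`,
`N(N-1)z²(1-z)^{N-2} ₃F₂([1,1,2-N],[2,2]; -z/(1-z)) = 1 + 1/(Nz) + o(1/N)`
as `N → ∞`, the series terminating after `N-1` terms (`k = 0,…,N-2`). -/
theorem hypergeometric_asymptotics
    (z : ℝ) (hz : z ∈ Set.Ioo (0:ℝ) 1) :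
    (fun N : ℕ =>
        (N : ℝ) * ((N : ℝ) - 1) * z ^ 2 * (1 - z) ^ (N - 2)
            * F32 (2 - (N : ℝ)) (N - 1) (-z / (1 - z))
          - (1 + 1 / ((N : ℝ) * z)))
      =o[atTop] (fun N : ℕ => 1 / (N : ℝ)) := by
  obtain ⟨hz0, hz1⟩ := hz
  refine isLittleO_one_div_of_tendsto_mul ((tendsto_add_atTop_iff_nat 2).1 ?_)
  have hweight (j : ℕ) := (tendsto_add_atTop_iff_nat 2).2
    (tendsto_natCast_mul_binomialWeight hz0 hz1 j)
  have hlim := ((((tendsto_mul_binomialRemainder hz0 hz1.le).sub ((hweight 0).const_mul 2)).sub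
    ((hweight 1).const_mul (3 / 2))).sub (tendsto_mul_one_sub_pow_div hz0 hz1)).sub
    (tendsto_const_div_natCast_add z⁻¹ 3)
  simp only [mul_zero, sub_zero] at hlim
  refine hlim.congr fun m => ?_
  rw [show m + 2 - 2 = m by omega, show m + 2 - 1 = m + 1 by omega]
  push_cast
  rw [show (2 : ℝ) - (m + 2) = -m by ring, show (m : ℝ) + 2 - 1 = m + 1 by ring,
    scaled_F32_neg_natCast hz1.ne, sum_one_add_inv_mul_binomialWeight_sub hz0.ne']
  field_simp
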